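/- arXiv:2302.02190 — 3 statements merged into one kernel-verified Lean document; each statement's English description precedes it below -/
import Mathlib

section
/- Let G be a finite simple graph and D an orientation of G with EE(D) ≠ EO(D). For each vertex v let L(v) be a set of d⁺_D(v) + 1 distinct integers. Then there exists a proper vertex coloring c : V(G) → ℤ with c(v) ∈ L(v) for every v. -/
open Finset MvPolynomial

/-- Out-degree of `v` in the digraph with arc set `S`. -/
def outDeg {α : Type*} [DecidableEq α] (S : Finset (α × α)) (v : α) : ℕ :=
  (S.filter fun p => p.1 = v).card

/-- In-degree of `v` in the digraph with arc set `S`. -/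
def inDeg {α : Type*} [DecidableEq α] (S : Finset (α × α)) (v : α) : ℕ :=
  (S.filter fun p => p.2 = v).card

/-- A digraph (arc set) is Eulerian if every vertex has equal in- and out-degree. -/
def IsEulerian {α : Type*} [DecidableEq α] (S : Finset (α × α)) : Prop :=
  ∀ v, outDeg S v = inDeg S v

instance {α : Type*} [DecidableEq α] [Fintype α] (S : Finset (α × α)) :
    Decidable (IsEulerian S) := by
  unfold IsEulerian; infer_instance

/-- Number of spanning Eulerian subdigraphs of `H` with an even number of edges. -/
def EE {α : Type*} [DecidableEq α] [Fintype α] (H : Finset (α × α)) : ℕ :=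
  (H.powerset.filter fun S => IsEulerian S ∧ Even S.card).card

/-- Number of spanning Eulerian subdigraphs of `H` with an odd number of edges. -/
def EO {α : Type*} [DecidableEq α] [Fintype α] (H : Finset (α × α)) : ℕ :=
  (H.powerset.filter fun S => IsEulerian S ∧ Odd S.card).card

/-- A digraph `H` contains a directed cycle of length `n`. -/
def HasDicycleLen {α : Type*} (H : Finset (α × α)) (n : ℕ) : Prop :=
  0 < n ∧ ∃ c : ZMod n → α, Function.Injective c ∧ ∀ i, (c i, c (i + 1)) ∈ H

/-- `A` is an orientation of the simple graph `G`. -/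
def IsOrientation {V : Type*} (G : SimpleGraph V) (A : Finset (V × V)) : Prop :=
  (∀ v w, G.Adj v w ↔ ((v, w) ∈ A ∨ (w, v) ∈ A)) ∧
  (∀ v w, (v, w) ∈ A → (w, v) ∉ A)

/-- Neighborhood `N_D(v)` in the digraph with arc set `A` (neighbors in either direction). -/
def nbr {V : Type*} [Fintype V] [DecidableEq V] (A : Finset (V × V)) (v : V) : Finset V :=
  Finset.univ.filter fun x => (v, x) ∈ A ∨ (x, v) ∈ A

/-- Closed neighborhood `N_D[v]`. -/
def nbrC {V : Type*} [Fintype V] [DecidableEq V] (A : Finset (V × V)) (v : V) : Finset V :=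
  insert v (nbr A v)

/-- Vertex type of `W(D)`: starred vertices `x*`, sector vertices `x^{vw}`,
and middle vertices `y^{vw}_x`. -/
abbrev WV (V : Type*) := V ⊕ ((V × V) × V) ⊕ ((V × V) × V)


instance {V : Type*} [DecidableEq V] : DecidableEq (WV V) :=
  inferInstanceAs (DecidableEq (V ⊕ ((V × V) × V) ⊕ ((V × V) × V)))

instance {V : Type*} [Fintype V] [DecidableEq V] : Fintype (WV V) :=
  inferInstanceAs (Fintype (V ⊕ ((V × V) × V) ⊕ ((V × V) × V)))

/-- The starred vertex `x*`. -/
def vstar {V : Type*} (x : V) : WV V := Sum.inl x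

/-- The sector vertex `x^{vw}` (for `e = (v,w)`). -/
def vsec {V : Type*} (e : V × V) (x : V) : WV V := Sum.inr (Sum.inl (e, x))

/-- The middle vertex `y^{vw}_x` (for `e = (v,w)`). -/
def vmid {V : Type*} (e : V × V) (x : V) : WV V := Sum.inr (Sum.inr (e, x))

/-- The set `N_D[v] △ N_D(w)` of possible endpoints of γ-paths through the `vw`-sector. -/
def gammaEnds {V : Type*} [Fintype V] [DecidableEq V] (A : Finset (V × V)) (e : V × V) :
    Finset V :=
  (nbrC A e.1 ∪ nbr A e.2) \ (nbrC A e.1 ∩ nbr A e.2)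

/-- The arc set of the digraph `W(D)` built from the digraph with arc set `A`. -/
def WArcSet {V : Type*} [Fintype V] [DecidableEq V] (A : Finset (V × V)) :
    Finset (WV V × WV V) :=
  (A.image fun e => (vstar e.1, vsec e e.1)) ∪
  (A.biUnion fun e => (nbr A e.1 \ nbr A e.2).image fun x => (vsec e e.1, vsec e x)) ∪
  (A.biUnion fun e => (nbr A e.2 \ nbrC A e.1).image fun x => (vsec e e.1, vmid e x)) ∪
  (A.biUnion fun e => (nbr A e.2 \ nbrC A e.1).image fun x => (vmid e x, vsec e x)) ∪
  (A.biUnion fun e => (gammaEnds A e).image fun x => (vsec e x, vstar x))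

/-- The γ-path `P(v,w;x)` from `v*` through the `vw`-sector to `x*`, as a set of arcs. -/
def gammaPath {V : Type*} [Fintype V] [DecidableEq V] (A : Finset (V × V)) (e : V × V)
    (x : V) : Finset (WV V × WV V) :=
  if x ∈ nbr A e.2 \ nbrC A e.1 then
    {(vstar e.1, vsec e e.1), (vsec e e.1, vmid e x), (vmid e x, vsec e x), (vsec e x, vstar x)}
  else
    {(vstar e.1, vsec e e.1), (vsec e e.1, vsec e x), (vsec e x, vstar x)}

/-- `ℓ` is an additive coloring of `G`. -/
def IsAdditiveColoring {V : Type*} [Fintype V] [DecidableEq V] (G : SimpleGraph V)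
    [DecidableRel G.Adj] (ℓ : V → ℕ) : Prop :=
  ∀ v w, G.Adj v w →
    ∑ u ∈ G.neighborFinset v, ℓ u ≠ ∑ u ∈ G.neighborFinset w, ℓ u

/-!
The graph polynomial `∏_{(u,v) ∈ A} (x_u - x_v)` vanishes exactly at the improper colorings.
Expanding the product by choosing `-x_v` on the arcs of a set `S ⊆ A` and `x_u` on the others
gives the monomial `x^{in(S) + out(A \ S)}` with sign `(-1)^|S|`; it equals
`x^{out(A)} = x^{out(S) + out(A \ S)}` exactly when `S` is Eulerian. Hence the coefficient of
`∏ x_v^{d⁺(v)}` is `EE(D) - EO(D) ≠ 0`. This monomial has degree `|A|`, the total degree of the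
polynomial, and `d⁺(v) < |L(v)|`, so the Combinatorial Nullstellensatz yields a point of
`∏ L(v)` at which the polynomial does not vanish.
-/

section DegreeVectors

variable {α : Type*}

noncomputable def outDegVec (S : Finset (α × α)) : α →₀ ℕ := ∑ e ∈ S, Finsupp.single e.1 1

noncomputable def inDegVec (S : Finset (α × α)) : α →₀ ℕ := ∑ e ∈ S, Finsupp.single e.2 1

lemma Finsupp.sum_single_one_apply {ι : Type*} [DecidableEq α] (s : Finset ι) (g : ι → α)
    (a : α) : (∑ i ∈ s, Finsupp.single (g i) 1 : α →₀ ℕ) a = #{i ∈ s | g i = a} := by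
  rw [Finset.card_filter, Finsupp.finsetSum_apply]
  exact Finset.sum_congr rfl fun i _ => Finsupp.single_apply

lemma outDegVec_apply [DecidableEq α] (S : Finset (α × α)) (v : α) : outDegVec S v = outDeg S v :=
  Finsupp.sum_single_one_apply S Prod.fst v

lemma inDegVec_apply [DecidableEq α] (S : Finset (α × α)) (v : α) : inDegVec S v = inDeg S v :=
  Finsupp.sum_single_one_apply S Prod.snd v

lemma isEulerian_iff_inDegVec_eq [DecidableEq α] (S : Finset (α × α)) :
    IsEulerian S ↔ inDegVec S = outDegVec S := by
  simp only [IsEulerian, Finsupp.ext_iff, inDegVec_apply, outDegVec_apply, eq_comm]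

lemma outDegVec_sdiff_add [DecidableEq α] {S A : Finset (α × α)} (h : S ⊆ A) :
    outDegVec (A \ S) + outDegVec S = outDegVec A :=
  Finset.sum_sdiff h

lemma degree_outDegVec (S : Finset (α × α)) : (outDegVec S).degree = #S := by
  simp [outDegVec, map_sum, Finsupp.degree_single]

end DegreeVectors

section GraphPolynomial

variable {α R : Type*} [CommRing R]

lemma prod_X_eq_monomial {ι : Type*} (s : Finset ι) (g : ι → α) :
    ∏ i ∈ s, (X (g i) : MvPolynomial α R) = monomial (∑ i ∈ s, Finsupp.single (g i) 1) 1 := by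
  rw [monomial_sum_one]
  rfl

lemma prod_X_sub_X_eq_sum_powerset [DecidableEq α] (A : Finset (α × α)) :
    ∏ e ∈ A, (X e.1 - X e.2 : MvPolynomial α R) =
      ∑ S ∈ A.powerset, (-1 : R) ^ #S • monomial (inDegVec S + outDegVec (A \ S)) 1 := by
  simp_rw [sub_eq_neg_add, Finset.prod_add, Finset.prod_neg, prod_X_eq_monomial, inDegVec,
    outDegVec, mul_assoc, monomial_mul, mul_one, smul_eq_C_mul, map_pow, map_neg, map_one]

lemma sum_neg_one_pow_card {β : Type*} (s : Finset (Finset β)) :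
    ∑ S ∈ s, (-1 : R) ^ #S = #{S ∈ s | Even #S} - #{S ∈ s | Odd #S} := by
  simp_rw [← Nat.not_even_iff_odd, neg_one_pow_eq_ite, Finset.sum_ite, Finset.sum_const,
    nsmul_eq_mul, mul_one, mul_neg_one, sub_eq_add_neg]

lemma totalDegree_prod_X_sub_X_le [Nontrivial R] (A : Finset (α × α)) :
    (∏ e ∈ A, (X e.1 - X e.2 : MvPolynomial α R)).totalDegree ≤ #A := by
  refine (totalDegree_finsetProd A _).trans ?_
  rw [Finset.card_eq_sum_ones]
  refine Finset.sum_le_sum fun e _ => (totalDegree_sub _ _).trans ?_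
  simp [totalDegree_X]

variable [DecidableEq α] [Fintype α]

lemma coeff_outDegVec_prod_X_sub_X (A : Finset (α × α)) :
    (∏ e ∈ A, (X e.1 - X e.2 : MvPolynomial α R)).coeff (outDegVec A) = EE A - EO A := by
  have hexp : ∀ S ∈ A.powerset,
      inDegVec S + outDegVec (A \ S) = outDegVec A ↔ IsEulerian S := fun S hS => by
    rw [← outDegVec_sdiff_add (Finset.mem_powerset.1 hS), add_comm, add_right_inj,
      isEulerian_iff_inDegVec_eq]
  calc _ = ∑ S ∈ A.powerset, if IsEulerian S then (-1 : R) ^ #S else 0 := by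
        rw [prod_X_sub_X_eq_sum_powerset, coeff_sum]
        refine Finset.sum_congr rfl fun S hS => ?_
        rw [coeff_smul, coeff_monomial, if_congr (hexp S hS) rfl rfl]
        split_ifs <;> simp
    _ = EE A - EO A := by
        rw [← Finset.sum_filter, sum_neg_one_pow_card, Finset.filter_filter,
          Finset.filter_filter, EE, EO]

end GraphPolynomial

/-- The Alon–Tarsi theorem. -/
theorem alon_tarsi {V : Type*} [Fintype V] [DecidableEq V]
    (G : SimpleGraph V) (A : Finset (V × V)) (hA : IsOrientation G A)
    (hAT : EE A ≠ EO A)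
    (L : V → Finset ℤ) (hL : ∀ v, (L v).card = outDeg A v + 1) :
    ∃ c : V → ℤ, (∀ v, c v ∈ L v) ∧ ∀ v w, G.Adj v w → c v ≠ c w := by
  set f : MvPolynomial V ℤ := ∏ e ∈ A, (X e.1 - X e.2)
  have hcoeff : f.coeff (outDegVec A) ≠ 0 := by
    rw [coeff_outDegVec_prod_X_sub_X, sub_ne_zero]
    exact_mod_cast hAT
  have hdeg : f.totalDegree = (outDegVec A).degree :=
    le_antisymm ((totalDegree_prod_X_sub_X_le A).trans (degree_outDegVec A).ge)
      (le_totalDegree (mem_support_iff.2 hcoeff))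
  obtain ⟨c, hcL, hc⟩ := combinatorial_nullstellensatz_exists_eval_nonzero f (outDegVec A)
    hcoeff hdeg L fun v => by rw [hL, outDegVec_apply]; omega
  refine ⟨c, hcL, fun v w hvw => ?_⟩
  simp only [f, map_prod, map_sub, eval_X, Finset.prod_ne_zero_iff, sub_ne_zero] at hc
  rcases (hA.1 v w).1 hvw with h | h
  · exact hc _ h
  · exact (hc _ h).symm
end

section
/- Let S be a spanning subdigraph of W(D). Then S is Eulerian if and only if (1) the edge set of S is a (possibly empty) union of pairwise edge-disjoint γ-paths, and (2) for each vertex v* corresponding to v ∈ V(D), the in-degree and out-degree of v* in S are equal. -/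
open Finset MvPolynomial

/-!
Every vertex of `W(D)` other than the starred ones has a single possible in-neighbour, and every
one other than the sector sources `v^{vw}` and the starred ones has a single possible
out-neighbour. In an Eulerian `S ⊆ W(D)` an arc therefore drags the whole γ-path through it into
`S`, walking forward to its end `x*` and back to its start `v*`; and since `v^{vw}` has in-degree at
most one in `S`, it also has out-degree at most one, so at most one γ-path per sector lies in `S`.
These paths are pairwise arc-disjoint and cover `S`. Conversely, a γ-path is balanced at each of
its interior vertices, so an arc-disjoint union of γ-paths is balanced away from the starred
vertices.
-/

section Digraph

variable {α : Type*} [DecidableEq α] {S W : Finset (α × α)} {s t u w : α}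

lemma outDeg_pos_iff : 0 < outDeg S u ↔ ∃ w, (u, w) ∈ S := by
  simp [outDeg, Finset.card_pos, Finset.Nonempty]

lemma inDeg_pos_iff : 0 < inDeg S u ↔ ∃ s, (s, u) ∈ S := by
  simp [inDeg, Finset.card_pos, Finset.Nonempty]

lemma outDeg_insert {p : α × α} (hp : p ∉ S) :
    outDeg (insert p S) u = outDeg S u + if p.1 = u then 1 else 0 := by
  unfold outDeg
  rw [Finset.filter_insert]
  split_ifs <;> simp [Finset.card_insert_of_notMem, hp]

lemma inDeg_insert {p : α × α} (hp : p ∉ S) :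
    inDeg (insert p S) u = inDeg S u + if p.2 = u then 1 else 0 := by
  unfold inDeg
  rw [Finset.filter_insert]
  split_ifs <;> simp [Finset.card_insert_of_notMem, hp]

lemma outDeg_biUnion {ι : Type*} {P : Finset ι} {f : ι → Finset (α × α)}
    (hP : (P : Set ι).PairwiseDisjoint f) (u : α) :
    outDeg (P.biUnion f) u = ∑ p ∈ P, outDeg (f p) u := by
  rw [outDeg, Finset.filter_biUnion, Finset.card_biUnion]
  · rfl
  · exact fun p hp q hq hpq => Finset.disjoint_filter_filter (hP hp hq hpq)

lemma inDeg_biUnion {ι : Type*} {P : Finset ι} {f : ι → Finset (α × α)}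
    (hP : (P : Set ι).PairwiseDisjoint f) (u : α) :
    inDeg (P.biUnion f) u = ∑ p ∈ P, inDeg (f p) u := by
  rw [inDeg, Finset.filter_biUnion, Finset.card_biUnion]
  · rfl
  · exact fun p hp q hq hpq => Finset.disjoint_filter_filter (hP hp hq hpq)

lemma outDeg_biUnion_eq_inDeg {ι : Type*} {P : Finset ι} {f : ι → Finset (α × α)}
    (hP : (P : Set ι).PairwiseDisjoint f) (hf : ∀ p ∈ P, outDeg (f p) u = inDeg (f p) u) :
    outDeg (P.biUnion f) u = inDeg (P.biUnion f) u := by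
  rw [outDeg_biUnion hP, inDeg_biUnion hP]
  exact Finset.sum_congr rfl hf

def walkArcs : List α → Finset (α × α)
  | a :: b :: l => insert (a, b) (walkArcs (b :: l))
  | _ => ∅

lemma fst_mem_of_mem_walkArcs {l : List α} {p : α × α} (hp : p ∈ walkArcs l) : p.1 ∈ l := by
  induction l with
  | nil => simp [walkArcs] at hp
  | cons a l ih =>
    match l, ih, hp with
    | [], _, hp => simp [walkArcs] at hp
    | b :: l, ih, hp =>
      rcases Finset.mem_insert.1 hp with rfl | hp
      · exact List.mem_cons_self
      · exact List.mem_cons_of_mem a (ih hp)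

lemma outDeg_walkArcs_add {l : List α} (hl : l.Nodup) (u : α) :
    outDeg (walkArcs l) u + (if l.getLast? = some u then 1 else 0) =
      inDeg (walkArcs l) u + (if l.head? = some u then 1 else 0) := by
  induction l with
  | nil => simp [walkArcs, outDeg, inDeg]
  | cons a l ih =>
    match l, ih, hl with
    | [], _, _ => simp [walkArcs, outDeg, inDeg]
    | b :: l, ih, hl =>
      have hab : (a, b) ∉ walkArcs (b :: l) := fun h =>
        (List.nodup_cons.1 hl).1 (fst_mem_of_mem_walkArcs h)
      have := ih (List.nodup_cons.1 hl).2
      simp only [walkArcs, outDeg_insert hab, inDeg_insert hab, List.getLast?_cons_cons,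
        List.head?_cons, Option.some.injEq] at this ⊢
      split_ifs at this ⊢ <;> omega

lemma outDeg_walkArcs_eq_inDeg {l : List α} (hl : l.Nodup) (hhead : l.head? ≠ some u)
    (hlast : l.getLast? ≠ some u) : outDeg (walkArcs l) u = inDeg (walkArcs l) u := by
  simpa [hhead, hlast] using outDeg_walkArcs_add hl u

namespace IsEulerian

lemma exists_in_of_mem (hE : IsEulerian S) (h : (u, w) ∈ S) : ∃ s, (s, u) ∈ S :=
  inDeg_pos_iff.1 (hE u ▸ outDeg_pos_iff.2 ⟨w, h⟩)

lemma exists_out_of_mem (hE : IsEulerian S) (h : (s, u) ∈ S) : ∃ w, (u, w) ∈ S :=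
  outDeg_pos_iff.1 ((hE u).symm ▸ inDeg_pos_iff.2 ⟨s, h⟩)

lemma mem_of_forall_in_eq (hE : IsEulerian S) (hSW : S ⊆ W)
    (hin : ∀ s, (s, u) ∈ W → s = t) (h : (u, w) ∈ S) : (t, u) ∈ S := by
  obtain ⟨s, hs⟩ := hE.exists_in_of_mem h
  rwa [hin s (hSW hs)] at hs

lemma mem_of_forall_out_eq (hE : IsEulerian S) (hSW : S ⊆ W)
    (hout : ∀ w, (u, w) ∈ W → w = t) (h : (s, u) ∈ S) : (u, t) ∈ S := by
  obtain ⟨w, hw⟩ := hE.exists_out_of_mem h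
  rwa [hout w (hSW hw)] at hw

lemma eq_of_forall_in_eq (hE : IsEulerian S) (hSW : S ⊆ W)
    (hin : ∀ s, (s, u) ∈ W → s = t) {w₁ w₂ : α} (h₁ : (u, w₁) ∈ S) (h₂ : (u, w₂) ∈ S) :
    w₁ = w₂ := by
  have hin_le_one : inDeg S u ≤ 1 := Finset.card_le_one.2 <| by
    rintro ⟨a, a'⟩ ha ⟨b, b'⟩ hb
    simp only [Finset.mem_filter] at ha hb
    obtain ⟨ha, rfl⟩ := ha
    obtain ⟨hb, rfl⟩ := hb
    rw [hin a (hSW ha), hin b (hSW hb)]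
  have := Finset.card_le_one.1 ((hE u).trans_le hin_le_one)
    _ (Finset.mem_filter.2 ⟨h₁, rfl⟩) _ (Finset.mem_filter.2 ⟨h₂, rfl⟩)
  exact congrArg Prod.snd this

end IsEulerian

end Digraph

section WVertices

variable {V : Type*} {e f : V × V} {x y : V}

@[simp] lemma vstar_inj : (vstar x : WV V) = vstar y ↔ x = y := by simp [vstar]

@[simp] lemma vsec_inj : (vsec e x : WV V) = vsec f y ↔ e = f ∧ x = y := by simp [vsec]

@[simp] lemma vmid_inj : (vmid e x : WV V) = vmid f y ↔ e = f ∧ x = y := by simp [vmid]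

@[simp] lemma vstar_ne_vsec : (vstar x : WV V) ≠ vsec e y := by simp [vstar, vsec]

@[simp] lemma vsec_ne_vstar : (vsec e y : WV V) ≠ vstar x := by simp [vstar, vsec]

@[simp] lemma vstar_ne_vmid : (vstar x : WV V) ≠ vmid e y := by simp [vstar, vmid]

@[simp] lemma vmid_ne_vstar : (vmid e y : WV V) ≠ vstar x := by simp [vstar, vmid]

@[simp] lemma vsec_ne_vmid : (vsec e x : WV V) ≠ vmid f y := by simp [vsec, vmid]

@[simp] lemma vmid_ne_vsec : (vmid f y : WV V) ≠ vsec e x := by simp [vsec, vmid]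

end WVertices

section WDigraph

variable {V : Type*} [Fintype V] [DecidableEq V] {A : Finset (V × V)} {e f : V × V}
  {v x y : V} {t u : WV V}

lemma mem_nbr : x ∈ nbr A v ↔ (v, x) ∈ A ∨ (x, v) ∈ A := by simp [nbr]

lemma fst_mem_nbr_snd (he : e ∈ A) : e.1 ∈ nbr A e.2 := mem_nbr.2 (Or.inr he)

lemma mem_gammaEnds_iff (he : e ∈ A) :
    x ∈ gammaEnds A e ↔ x ∈ nbr A e.1 \ nbr A e.2 ∨ x ∈ nbr A e.2 \ nbrC A e.1 := by
  have := fst_mem_nbr_snd he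
  simp only [gammaEnds, nbrC, Finset.mem_sdiff, Finset.mem_union, Finset.mem_inter,
    Finset.mem_insert]
  by_cases hx : x = e.1
  · subst hx; tauto
  · tauto

lemma fst_notMem_gammaEnds (he : e ∈ A) : e.1 ∉ gammaEnds A e := by
  simp [gammaEnds, nbrC, fst_mem_nbr_snd he]

lemma ne_fst_of_mem_gammaEnds (he : e ∈ A) (hx : x ∈ gammaEnds A e) : x ≠ e.1 :=
  ne_of_mem_of_not_mem hx (fst_notMem_gammaEnds he)

lemma mem_WArcSet {a : WV V × WV V} : a ∈ WArcSet A ↔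
    (∃ e ∈ A, a = (vstar e.1, vsec e e.1)) ∨
    (∃ e ∈ A, ∃ x ∈ nbr A e.1 \ nbr A e.2, a = (vsec e e.1, vsec e x)) ∨
    (∃ e ∈ A, ∃ x ∈ nbr A e.2 \ nbrC A e.1, a = (vsec e e.1, vmid e x)) ∨
    (∃ e ∈ A, ∃ x ∈ nbr A e.2 \ nbrC A e.1, a = (vmid e x, vsec e x)) ∨
    (∃ e ∈ A, ∃ x ∈ gammaEnds A e, a = (vsec e x, vstar x)) := by
  simp [WArcSet, eq_comm]

/-- The vertex following `v^{vw}` on the γ-path `P(v,w;x)`, for `e = (v,w)`. -/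
def gammaSucc (A : Finset (V × V)) (e : V × V) (x : V) : WV V :=
  if x ∈ nbr A e.2 \ nbrC A e.1 then vmid e x else vsec e x

lemma eq_vstar_of_mem_WArcSet_to_vsec_fst (h : (t, vsec e e.1) ∈ WArcSet A) :
    t = vstar e.1 := by
  rcases mem_WArcSet.1 h with ⟨f, hf, h⟩ | ⟨f, hf, y, hy, h⟩ | ⟨f, hf, y, hy, h⟩ |
    ⟨f, hf, y, hy, h⟩ | ⟨f, hf, y, hy, h⟩ <;> simp only [Prod.mk.injEq, vsec_inj] at h
  · obtain ⟨rfl, rfl, -⟩ := h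
    rfl
  · obtain ⟨-, rfl, rfl⟩ := h
    exact absurd (fst_mem_nbr_snd hf) (Finset.mem_sdiff.1 hy).2
  · simp at h
  · obtain ⟨-, rfl, rfl⟩ := h
    exact absurd (Finset.mem_insert_self _ _) (Finset.mem_sdiff.1 hy).2
  · simp at h

lemma eq_vsec_fst_of_mem_WArcSet_to_vmid (h : (t, vmid e x) ∈ WArcSet A) :
    t = vsec e e.1 := by
  rcases mem_WArcSet.1 h with ⟨f, hf, h⟩ | ⟨f, hf, y, hy, h⟩ | ⟨f, hf, y, hy, h⟩ |
    ⟨f, hf, y, hy, h⟩ | ⟨f, hf, y, hy, h⟩ <;> simp_all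

lemma eq_vsec_fst_of_mem_WArcSet_to_vsec (hx : x ∈ nbr A e.1 \ nbr A e.2)
    (h : (t, vsec e x) ∈ WArcSet A) : t = vsec e e.1 := by
  rcases mem_WArcSet.1 h with ⟨f, hf, h⟩ | ⟨f, hf, y, hy, h⟩ | ⟨f, hf, y, hy, h⟩ |
    ⟨f, hf, y, hy, h⟩ | ⟨f, hf, y, hy, h⟩ <;> simp_all [fst_mem_nbr_snd]

lemma eq_vmid_of_mem_WArcSet_to_vsec (hx : x ∈ nbr A e.2 \ nbrC A e.1)
    (h : (t, vsec e x) ∈ WArcSet A) : t = vmid e x := by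
  rcases mem_WArcSet.1 h with ⟨f, hf, h⟩ | ⟨f, hf, y, hy, h⟩ | ⟨f, hf, y, hy, h⟩ |
    ⟨f, hf, y, hy, h⟩ | ⟨f, hf, y, hy, h⟩ <;> simp_all [nbrC]

lemma eq_vsec_of_mem_WArcSet_from_vmid (h : (vmid e x, u) ∈ WArcSet A) : u = vsec e x := by
  rcases mem_WArcSet.1 h with ⟨f, hf, h⟩ | ⟨f, hf, y, hy, h⟩ | ⟨f, hf, y, hy, h⟩ |
    ⟨f, hf, y, hy, h⟩ | ⟨f, hf, y, hy, h⟩ <;> simp_all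

lemma eq_vstar_of_mem_WArcSet_from_vsec (hx : x ≠ e.1) (h : (vsec e x, u) ∈ WArcSet A) :
    u = vstar x := by
  rcases mem_WArcSet.1 h with ⟨f, hf, h⟩ | ⟨f, hf, y, hy, h⟩ | ⟨f, hf, y, hy, h⟩ |
    ⟨f, hf, y, hy, h⟩ | ⟨f, hf, y, hy, h⟩ <;> simp_all

lemma exists_eq_gammaSucc_of_mem_WArcSet_from_vsec_fst
    (h : (vsec e e.1, u) ∈ WArcSet A) : ∃ x ∈ gammaEnds A e, u = gammaSucc A e x := by
  rcases mem_WArcSet.1 h with ⟨f, hf, h⟩ | ⟨f, hf, y, hy, h⟩ | ⟨f, hf, y, hy, h⟩ |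
    ⟨f, hf, y, hy, h⟩ | ⟨f, hf, y, hy, h⟩ <;> simp only [Prod.mk.injEq, vsec_inj] at h
  · simp at h
  · obtain ⟨⟨rfl, -⟩, rfl⟩ := h
    refine ⟨y, (mem_gammaEnds_iff hf).2 (Or.inl hy), ?_⟩
    rw [gammaSucc, if_neg fun hy' => (Finset.mem_sdiff.1 hy).2 (Finset.mem_sdiff.1 hy').1]
  · obtain ⟨⟨rfl, -⟩, rfl⟩ := h
    exact ⟨y, (mem_gammaEnds_iff hf).2 (Or.inr hy), by rw [gammaSucc, if_pos hy]⟩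
  · simp at h
  · obtain ⟨⟨rfl, rfl⟩, -⟩ := h
    exact absurd hy (fst_notMem_gammaEnds hf)

lemma gammaSucc_injective : Function.Injective (gammaSucc A e) := fun x y => by
  unfold gammaSucc
  split_ifs <;> simp

lemma vstar_vsec_fst_mem_gammaPath : (vstar e.1, vsec e e.1) ∈ gammaPath A e x := by
  unfold gammaPath; split_ifs <;> simp

lemma gammaSucc_mem_gammaPath : (vsec e e.1, gammaSucc A e x) ∈ gammaPath A e x := by
  unfold gammaPath gammaSucc; split_ifs <;> simp

lemma vmid_vsec_mem_gammaPath (hx : x ∈ nbr A e.2 \ nbrC A e.1) :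
    (vmid e x, vsec e x) ∈ gammaPath A e x := by
  simp [gammaPath, hx]

lemma vsec_vstar_mem_gammaPath : (vsec e x, vstar x) ∈ gammaPath A e x := by
  unfold gammaPath; split_ifs <;> simp

lemma disjoint_gammaPath (hef : e ≠ f) : Disjoint (gammaPath A e x) (gammaPath A f y) := by
  unfold gammaPath
  split_ifs <;> simp [Finset.disjoint_left, hef]

lemma gammaPath_eq_walkArcs : gammaPath A e x = walkArcs
    ((if x ∈ nbr A e.2 \ nbrC A e.1 then [vstar e.1, vsec e e.1, vmid e x, vsec e x, vstar x]
      else [vstar e.1, vsec e e.1, vsec e x, vstar x])) := by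
  unfold gammaPath; split_ifs <;> simp [walkArcs]

lemma outDeg_gammaPath_eq_inDeg (hx : x ≠ e.1) (hu : ∀ y, u ≠ vstar y) :
    outDeg (gammaPath A e x) u = inDeg (gammaPath A e x) u := by
  rw [gammaPath_eq_walkArcs]
  apply outDeg_walkArcs_eq_inDeg <;> split_ifs <;> simp [Ne.symm hx, Ne.symm (hu _)]

end WDigraph

section Decomposition

variable {V : Type*} [Fintype V] [DecidableEq V] {A : Finset (V × V)}
  {S : Finset (WV V × WV V)} {e : V × V} {x : V}

namespace IsEulerian

lemma vsec_vstar_mem_of_gammaSucc_mem (hE : IsEulerian S) (hSW : S ⊆ WArcSet A) (hx : x ≠ e.1)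
    (h : (vsec e e.1, gammaSucc A e x) ∈ S) : (vsec e x, vstar x) ∈ S := by
  have hlast : ∀ {t}, (t, vsec e x) ∈ S → (vsec e x, vstar x) ∈ S :=
    hE.mem_of_forall_out_eq hSW fun _ hu => eq_vstar_of_mem_WArcSet_from_vsec hx hu
  unfold gammaSucc at h
  split_ifs at h
  · exact hlast (hE.mem_of_forall_out_eq hSW (fun _ hu => eq_vsec_of_mem_WArcSet_from_vmid hu) h)
  · exact hlast h

lemma exists_gammaPath_of_mem (hE : IsEulerian S) (hSW : S ⊆ WArcSet A)
    {a : WV V × WV V} (ha : a ∈ S) :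
    ∃ e ∈ A, ∃ x ∈ gammaEnds A e, a ∈ gammaPath A e x ∧ (vsec e x, vstar x) ∈ S := by
  have of_vsec_fst : ∀ {e : V × V} {u : WV V}, e ∈ A → (vsec e e.1, u) ∈ S →
      ∃ x ∈ gammaEnds A e, u = gammaSucc A e x ∧ (vsec e x, vstar x) ∈ S := by
    intro e u he hu
    obtain ⟨x, hx, rfl⟩ := exists_eq_gammaSucc_of_mem_WArcSet_from_vsec_fst (hSW hu)
    exact ⟨x, hx, rfl, hE.vsec_vstar_mem_of_gammaSucc_mem hSW (ne_fst_of_mem_gammaEnds he hx) hu⟩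
  rcases mem_WArcSet.1 (hSW ha) with ⟨e, he, rfl⟩ | ⟨e, he, x, -, rfl⟩ | ⟨e, he, x, -, rfl⟩ |
    ⟨e, he, x, hx, rfl⟩ | ⟨e, he, x, hx, rfl⟩
  · obtain ⟨u, hu⟩ := hE.exists_out_of_mem ha
    obtain ⟨x, hx, -, hlast⟩ := of_vsec_fst he hu
    exact ⟨e, he, x, hx, vstar_vsec_fst_mem_gammaPath, hlast⟩
  · obtain ⟨y, hy, hxy, hlast⟩ := of_vsec_fst he ha
    exact ⟨e, he, y, hy, hxy ▸ gammaSucc_mem_gammaPath, hlast⟩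
  · obtain ⟨y, hy, hxy, hlast⟩ := of_vsec_fst he ha
    exact ⟨e, he, y, hy, hxy ▸ gammaSucc_mem_gammaPath, hlast⟩
  · have hx' : x ∈ gammaEnds A e := (mem_gammaEnds_iff he).2 (Or.inr hx)
    refine ⟨e, he, x, hx', vmid_vsec_mem_gammaPath hx, hE.mem_of_forall_out_eq hSW ?_ ha⟩
    exact fun _ hu => eq_vstar_of_mem_WArcSet_from_vsec (ne_fst_of_mem_gammaEnds he hx') hu
  · exact ⟨e, he, x, hx, vsec_vstar_mem_gammaPath, ha⟩

lemma gammaPath_subset (hE : IsEulerian S) (hSW : S ⊆ WArcSet A) (he : e ∈ A)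
    (hx : x ∈ gammaEnds A e) (h : (vsec e x, vstar x) ∈ S) : gammaPath A e x ⊆ S := by
  have hfirst : ∀ {u}, (vsec e e.1, u) ∈ S → (vstar e.1, vsec e e.1) ∈ S :=
    hE.mem_of_forall_in_eq hSW fun _ ht => eq_vstar_of_mem_WArcSet_to_vsec_fst ht
  unfold gammaPath
  rcases (mem_gammaEnds_iff he).1 hx with hnear | hmid
  · have h₂ := hE.mem_of_forall_in_eq hSW
      (fun _ ht => eq_vsec_fst_of_mem_WArcSet_to_vsec hnear ht) h
    rw [if_neg fun hmid => (Finset.mem_sdiff.1 hnear).2 (Finset.mem_sdiff.1 hmid).1]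
    simp [Finset.insert_subset_iff, hfirst h₂, h₂, h]
  · have h₃ := hE.mem_of_forall_in_eq hSW (fun _ ht => eq_vmid_of_mem_WArcSet_to_vsec hmid ht) h
    have h₂ := hE.mem_of_forall_in_eq hSW (fun _ ht => eq_vsec_fst_of_mem_WArcSet_to_vmid ht) h₃
    rw [if_pos hmid]
    simp [Finset.insert_subset_iff, hfirst h₂, h₂, h₃, h]

lemma exists_gammaPath_decomposition (hE : IsEulerian S) (hSW : S ⊆ WArcSet A) :
    ∃ P : Finset ((V × V) × V), (∀ p ∈ P, p.1 ∈ A ∧ p.2 ∈ gammaEnds A p.1) ∧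
      (P : Set ((V × V) × V)).PairwiseDisjoint (fun p => gammaPath A p.1 p.2) ∧
      S = P.biUnion fun p => gammaPath A p.1 p.2 := by
  refine ⟨(A ×ˢ Finset.univ).filter fun p => p.2 ∈ gammaEnds A p.1 ∧ gammaPath A p.1 p.2 ⊆ S,
    fun p hp => ?_, ?_, ?_⟩
  · simp only [Finset.mem_filter, Finset.mem_product] at hp
    exact ⟨hp.1.1, hp.2.1⟩
  · rintro ⟨e, x⟩ hp ⟨f, y⟩ hq hne
    simp only [Finset.mem_coe, Finset.mem_filter, Finset.mem_product] at hp hq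
    obtain rfl | hef := eq_or_ne e f
    · refine absurd (congrArg _ (gammaSucc_injective (A := A) (e := e) ?_)) hne
      exact hE.eq_of_forall_in_eq hSW (fun _ ht => eq_vstar_of_mem_WArcSet_to_vsec_fst ht)
        (hp.2.2 gammaSucc_mem_gammaPath) (hq.2.2 gammaSucc_mem_gammaPath)
    · exact disjoint_gammaPath hef
  · ext a
    simp only [Finset.mem_biUnion, Finset.mem_filter, Finset.mem_product, Finset.mem_univ,
      and_true]
    refine ⟨fun ha => ?_, fun ⟨_, ⟨_, _, hsub⟩, hap⟩ => hsub hap⟩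
    obtain ⟨e, he, x, hx, hax, hlast⟩ := hE.exists_gammaPath_of_mem hSW ha
    exact ⟨(e, x), ⟨he, hx, hE.gammaPath_subset hSW he hx hlast⟩, hax⟩

end IsEulerian

lemma isEulerian_biUnion_gammaPath {P : Finset ((V × V) × V)}
    (hP : ∀ p ∈ P, p.1 ∈ A ∧ p.2 ∈ gammaEnds A p.1)
    (hdisj : (P : Set ((V × V) × V)).PairwiseDisjoint (fun p => gammaPath A p.1 p.2))
    (hstar : ∀ v, outDeg (P.biUnion fun p => gammaPath A p.1 p.2) (vstar v) =
      inDeg (P.biUnion fun p => gammaPath A p.1 p.2) (vstar v)) :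
    IsEulerian (P.biUnion fun p => gammaPath A p.1 p.2) := by
  rintro (v | u)
  · exact hstar v
  · exact outDeg_biUnion_eq_inDeg hdisj fun p hp =>
      outDeg_gammaPath_eq_inDeg (ne_fst_of_mem_gammaEnds (hP p hp).1 (hP p hp).2)
        fun _ => Sum.inr_ne_inl

end Decomposition

theorem eulerian_iff_gammaPath_decomposition_general {V : Type*} [Fintype V] [DecidableEq V]
    (A : Finset (V × V))
    (S : Finset (WV V × WV V)) (hS : S ⊆ WArcSet A) :
    IsEulerian S ↔
      ((∃ P : Finset ((V × V) × V),
          (∀ p ∈ P, p.1 ∈ A ∧ p.2 ∈ gammaEnds A p.1) ∧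
          ((P : Set ((V × V) × V)).Pairwise fun p q =>
            Disjoint (gammaPath A p.1 p.2) (gammaPath A q.1 q.2)) ∧
          S = P.biUnion fun p => gammaPath A p.1 p.2) ∧
        ∀ v : V, outDeg S (vstar v) = inDeg S (vstar v)) := by
  refine ⟨fun hE => ⟨hE.exists_gammaPath_decomposition hS, fun v => hE (vstar v)⟩, ?_⟩
  rintro ⟨⟨P, hP, hdisj, rfl⟩, hstar⟩
  exact isEulerian_biUnion_gammaPath hP hdisj hstar

/-- A spanning subdigraph `S` of `W(D)` is Eulerian iff its edge set is a union of pairwise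
edge-disjoint γ-paths and each starred vertex `v*` has equal in- and out-degree in `S`. -/
theorem eulerian_iff_gammaPath_decomposition {V : Type*} [Fintype V] [DecidableEq V]
    (A : Finset (V × V)) (hsimple : ∀ v, (v, v) ∉ A)
    (S : Finset (WV V × WV V)) (hS : S ⊆ WArcSet A) :
    IsEulerian S ↔
      ((∃ P : Finset ((V × V) × V),
          (∀ p ∈ P, p.1 ∈ A ∧ p.2 ∈ gammaEnds A p.1) ∧
          ((P : Set ((V × V) × V)).Pairwise fun p q =>
            Disjoint (gammaPath A p.1 p.2) (gammaPath A q.1 q.2)) ∧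
          S = P.biUnion fun p => gammaPath A p.1 p.2) ∧
        ∀ v : V, outDeg S (vstar v) = inDeg S (vstar v)) :=
  eulerian_iff_gammaPath_decomposition_general A S hS
end

section
/- Let G be a tripartite graph (properly 3-colorable with color classes A, B, C) admitting an orientation D such that every vertex in one of the color classes is simplicial in G and has out-degree 0 in D. If L(v) is a list of d⁺_D(v) + 1 positive integers for each v, then G admits an additive coloring assigning to each v an element of L(v). In particular, η_ℓ(G) ≤ Δ(G) + 1 for such G. -/
/-!
Orient `G` by `A` and consider `P = ∏_{(v,w) ∈ A} (∑_{u ∈ N(w)} x_u - ∑_{u ∈ N(v)} x_u)` over `ℤ`: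
a point of `∏ L(v)` where `P` does not vanish is an additive colouring. `P` is homogeneous of
degree `|A| = ∑ d⁺(v)`, so by the Combinatorial Nullstellensatz it suffices that the coefficient
of `∏ x_v ^ d⁺(v)` is nonzero. That coefficient is a sum, over the ways of choosing one variable in
each factor with total multidegree `d⁺`, of products of the chosen coefficients. Only vertices of
positive out-degree are chosen, hence none of class `i`; and if `ε = ±1` separates the two other
classes, every nonzero coefficient of `x_u` in the factor of `(v, w)` equals `ε(u) ε(v)` (for `+1`,
simpliciality of the vertices of class `i` keeps `w` out of it). So every term is the square
`(∏_{(v,w)} ε(v))²`, and the term choosing every tail is `1`.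
-/

open Finset MvPolynomial

section MultiDegree

variable {ι σ : Type*} [Fintype ι]

lemma prod_comp_eq_finsuppProd {M : Type*} [CommMonoid M] (f : ι → σ) (φ : σ → M) :
    ∏ j, φ (f j) = (∑ j, Finsupp.single (f j) 1).prod fun v n => φ v ^ n := by
  rw [← Finsupp.prod_finsetSum_index (fun _ => pow_zero _) (fun _ _ _ => pow_add _ _ _)]
  simp [Finsupp.prod_single_index]

lemma mem_range_of_sum_single_eq {f τ : ι → σ}
    (h : ∑ j, Finsupp.single (f j) 1 = ∑ j, Finsupp.single (τ j) 1) (j : ι) :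
    f j ∈ Set.range τ := by
  classical
  have hcount := congrArg (· (f j)) h
  simp only [Finsupp.finsetSum_apply, Finsupp.single_apply, sum_boole, Nat.cast_id] at hcount
  obtain ⟨k, hk⟩ : (univ.filter fun k => τ k = f j).Nonempty := by
    rw [← card_pos, ← hcount]
    exact card_pos.2 ⟨j, by simp⟩
  exact ⟨k, (mem_filter.1 hk).2⟩

end MultiDegree

namespace MvPolynomial

lemma IsHomogeneous.exists_eval_ne_zero_of_coeff_ne_zero {R σ : Type*} [Finite σ] [CommRing R]
    [IsDomain R] {φ : MvPolynomial σ R} {n : ℕ} (hφ : φ.IsHomogeneous n) {t : σ →₀ ℕ}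
    (ht : coeff t φ ≠ 0) (S : σ → Finset R) (hS : ∀ i, t i < #(S i)) :
    ∃ x : σ → R, (∀ i, x i ∈ S i) ∧ eval x φ ≠ 0 := by
  have hdeg : φ.totalDegree = t.degree := by
    rw [hφ.totalDegree fun h => ht (by simp [h])]
    by_contra h
    exact ht (hφ.coeff_eq_zero (Ne.symm h))
  exact combinatorial_nullstellensatz_exists_eval_nonzero φ t ht hdeg S hS

variable {R σ ι : Type*} [Fintype σ] [Fintype ι]

lemma isHomogeneous_prod_sum_C_mul_X [CommSemiring R] (c : ι → σ → R) :
    (∏ j, ∑ u, C (c j u) * X u).IsHomogeneous (Fintype.card ι) := by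
  simpa using IsHomogeneous.prod univ _ (fun _ => 1)
    fun j _ => IsHomogeneous.sum _ _ _ fun u _ => isHomogeneous_C_mul_X (c j u) u

variable [DecidableEq σ] [DecidableEq ι]

lemma coeff_prod_sum_C_mul_X [CommRing R] (c : ι → σ → R) (t : σ →₀ ℕ) :
    coeff t (∏ j, ∑ u, C (c j u) * X u) =
      ∑ f ∈ univ.filter (fun f : ι → σ => ∑ j, Finsupp.single (f j) 1 = t), ∏ j, c j (f j) := by
  rw [prod_univ_sum, Fintype.piFinset_univ, coeff_sum, sum_filter]
  refine sum_congr rfl fun f _ => ?_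
  rw [prod_mul_distrib, ← map_prod]
  simp only [X, ← monomial_sum_one, C_mul_monomial, mul_one, coeff_monomial]

/-- Every term of `coeff_prod_sum_C_mul_X` is `0` or `(∏ j, ε (τ j)) ^ 2`. -/
lemma coeff_prod_sum_C_mul_X_pos [CommRing R] [LinearOrder R] [IsStrictOrderedRing R]
    (c : ι → σ → R) (τ : ι → σ) (ε : σ → R) (hτ : ∀ j, c j (τ j) ≠ 0)
    (hc : ∀ j u, u ∈ Set.range τ → c j u ≠ 0 → c j u = ε u * ε (τ j)) :
    0 < coeff (∑ j, Finsupp.single (τ j) 1) (∏ j, ∑ u, C (c j u) * X u) := by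
  rw [coeff_prod_sum_C_mul_X]
  refine sum_pos' (fun f hf => ?_) ⟨τ, by simp, prod_pos fun j _ => ?_⟩
  · have hfτ := (mem_filter.1 hf).2
    by_cases hz : ∃ j, c j (f j) = 0
    · obtain ⟨j, hj⟩ := hz
      rw [prod_eq_zero (mem_univ j) hj]
    push Not at hz
    have hsq : ∏ j, c j (f j) = (∏ j, ε (τ j)) * ∏ j, ε (τ j) := by
      rw [prod_congr rfl fun j _ => hc j (f j) (mem_range_of_sum_single_eq hfτ j) (hz j),
        prod_mul_distrib, prod_comp_eq_finsuppProd f, hfτ, ← prod_comp_eq_finsuppProd]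
    exact hsq ▸ mul_self_nonneg _
  · exact lt_of_le_of_ne (hc j (τ j) ⟨j, rfl⟩ (hτ j) ▸ mul_self_nonneg _) (hτ j).symm

end MvPolynomial

lemma Fin.eq_of_ne_of_ne_three {i a b c : Fin 3} (ha : a ≠ i) (hb : b ≠ i) (hc : c ≠ i)
    (hac : a ≠ c) (hbc : b ≠ c) : a = b := by
  omega

def classSign (i a : Fin 3) : ℤ := if a = i + 1 then 1 else -1

lemma classSign_mul_self (i a : Fin 3) : classSign i a * classSign i a = 1 := by
  unfold classSign; split_ifs <;> rfl

lemma classSign_mul_of_ne {i a b : Fin 3} (ha : a ≠ i) (hb : b ≠ i) (hab : a ≠ b) :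
    classSign i a * classSign i b = -1 := by
  revert a b; decide +revert

section Orientation

variable {V : Type*} [DecidableEq V]

lemma outDeg_ne_zero {A : Finset (V × V)} {e : V × V} (he : e ∈ A) : outDeg A e.1 ≠ 0 :=
  card_ne_zero_of_mem (mem_filter.2 ⟨he, rfl⟩)

lemma sum_single_fst_apply (A : Finset (V × V)) (v : V) :
    (∑ e : A, Finsupp.single e.1.1 1) v = outDeg A v := by
  simp only [univ_eq_attach, Finsupp.finsetSum_apply, Finsupp.single_apply, outDeg, card_filter]
  exact sum_attach A fun e => if e.1 = v then 1 else 0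

lemma outDeg_le_degree [Fintype V] {G : SimpleGraph V} [DecidableRel G.Adj]
    {A : Finset (V × V)} (hA : IsOrientation G A) (v : V) : outDeg A v ≤ G.degree v := by
  refine card_le_card_of_injOn Prod.snd (fun e he => ?_) fun e he e' he' h => ?_
  · rw [mem_coe, mem_filter] at he
    rw [mem_coe, SimpleGraph.mem_neighborFinset, ← he.2]
    exact (hA.1 _ _).2 (Or.inl he.1)
  · rw [mem_coe, mem_filter] at he he'
    exact Prod.ext (he.2.trans he'.2.symm) h

end Orientation

section ArcWeight

variable {V : Type*} (G : SimpleGraph V) [DecidableRel G.Adj]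

def arcWeight (e : V × V) (u : V) : ℤ :=
  (if G.Adj e.2 u then 1 else 0) - if G.Adj e.1 u then 1 else 0

variable {G}

lemma sum_arcWeight_mul [Fintype V] (e : V × V) (x : V → ℤ) :
    ∑ u, arcWeight G e u * x u =
      ∑ u ∈ G.neighborFinset e.2, x u - ∑ u ∈ G.neighborFinset e.1, x u := by
  simp [arcWeight, sub_mul, sum_sub_distrib, SimpleGraph.neighborFinset_eq_filter, sum_filter]

lemma arcWeight_fst {e : V × V} (he : G.Adj e.1 e.2) : arcWeight G e e.1 = 1 := by
  simp [arcWeight, he.symm]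

lemma arcWeight_eq_classSign_mul (col : G.Coloring (Fin 3)) {i : Fin 3}
    (hclique : ∀ v, col v = i → G.IsClique (G.neighborSet v)) {e : V × V}
    (he : G.Adj e.1 e.2) (he₁ : col e.1 ≠ i) {u : V} (hu : col u ≠ i)
    (hw : arcWeight G e u ≠ 0) :
    arcWeight G e u = classSign i (col u) * classSign i (col e.1) := by
  unfold arcWeight at hw ⊢
  split_ifs at hw ⊢ with h₂ h₁ h₁
  · exact absurd rfl hw
  · have hcol : col u = col e.1 := by
      by_cases hue : u = e.1
      · rw [hue]
      have he₂ : col e.2 ≠ i := fun h => h₁ (hclique e.2 h he.symm h₂ (Ne.symm hue))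
      exact Fin.eq_of_ne_of_ne_three hu he₁ he₂ (col.valid h₂.symm) (col.valid he)
    rw [hcol, classSign_mul_self, sub_zero]
  · rw [zero_sub, classSign_mul_of_ne hu he₁ (col.valid h₁).symm]
  · exact absurd rfl hw

end ArcWeight

theorem exists_isAdditiveColoring_of_outDeg_lt {V : Type*} [Fintype V] [DecidableEq V]
    {G : SimpleGraph V} [DecidableRel G.Adj] (col : G.Coloring (Fin 3)) (i : Fin 3)
    {A : Finset (V × V)} (hA : IsOrientation G A)
    (hclass : ∀ v, col v = i → G.IsClique (G.neighborSet v) ∧ outDeg A v = 0)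
    (L : V → Finset ℕ) (hL : ∀ v, outDeg A v < #(L v)) :
    ∃ ℓ : V → ℕ, (∀ v, ℓ v ∈ L v) ∧ IsAdditiveColoring G ℓ := by
  have hadj (e : A) : G.Adj e.1.1 e.1.2 := (hA.1 _ _).2 (Or.inl e.2)
  have htail (e : A) : col e.1.1 ≠ i := fun h => outDeg_ne_zero e.2 (hclass _ h).2
  have hcoeff : 0 < coeff (∑ e : A, Finsupp.single e.1.1 1)
      (∏ e : A, ∑ u, C (arcWeight G e u) * X u) :=
    coeff_prod_sum_C_mul_X_pos _ _ (fun v => classSign i (col v))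
      (fun e => by rw [arcWeight_fst (hadj e)]; exact one_ne_zero)
      fun e u ⟨e', he'⟩ hw => arcWeight_eq_classSign_mul col (fun v h => (hclass v h).1)
        (hadj e) (htail e) (he' ▸ htail e') hw
  obtain ⟨x, hxL, hx⟩ := (isHomogeneous_prod_sum_C_mul_X _).exists_eval_ne_zero_of_coeff_ne_zero
    hcoeff.ne' (fun v => (L v).image (Nat.cast : ℕ → ℤ)) fun v => by
      rw [sum_single_fst_apply, card_image_of_injective _ Nat.cast_injective]
      exact hL v
  choose ℓ hℓL hℓx using fun v => mem_image.1 (hxL v)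
  obtain rfl : x = fun v => (ℓ v : ℤ) := funext fun v => (hℓx v).symm
  refine ⟨ℓ, hℓL, fun v w hvw hsum => hx ?_⟩
  simp only [map_prod, map_sum, map_mul, eval_C, eval_X, sum_arcWeight_mul]
  have hsum' : ∑ u ∈ G.neighborFinset v, (ℓ u : ℤ) = ∑ u ∈ G.neighborFinset w, (ℓ u : ℤ) :=
    mod_cast hsum
  rcases (hA.1 v w).1 hvw with h | h
  · exact prod_eq_zero (mem_univ ⟨(v, w), h⟩) (by rw [hsum', sub_self])
  · exact prod_eq_zero (mem_univ ⟨(w, v), h⟩) (by rw [hsum', sub_self])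

/-- A tripartite graph with an orientation such that one color class consists of simplicial
vertices of out-degree 0 admits an additive coloring from any lists of `d⁺_D(v) + 1` positive
integers; in particular, from any lists of `Δ(G) + 1` positive integers. -/
theorem additive_coloring_tripartite {V : Type*} [Fintype V] [DecidableEq V]
    (G : SimpleGraph V) [DecidableRel G.Adj]
    (C : G.Coloring (Fin 3)) (i : Fin 3)
    (A : Finset (V × V)) (hA : IsOrientation G A)
    (hclass : ∀ v, C v = i → G.IsClique (G.neighborSet v) ∧ outDeg A v = 0) :
    (∀ L : V → Finset ℕ, (∀ v, ∀ k ∈ L v, 0 < k) →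
      (∀ v, (L v).card = outDeg A v + 1) →
      ∃ ℓ : V → ℕ, (∀ v, ℓ v ∈ L v) ∧ IsAdditiveColoring G ℓ) ∧
    (∀ L : V → Finset ℕ, (∀ v, ∀ k ∈ L v, 0 < k) →
      (∀ v, (L v).card = G.maxDegree + 1) →
      ∃ ℓ : V → ℕ, (∀ v, ℓ v ∈ L v) ∧ IsAdditiveColoring G ℓ) := by
  refine ⟨fun L _ hL => ?_, fun L _ hL => ?_⟩
  · exact exists_isAdditiveColoring_of_outDeg_lt C i hA hclass L fun v => by
      rw [hL v]
      exact Nat.lt_succ_self _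
  · exact exists_isAdditiveColoring_of_outDeg_lt C i hA hclass L fun v => by
      rw [hL v]
      exact Nat.lt_succ_of_le ((outDeg_le_degree hA v).trans (G.degree_le_maxDegree v))
end
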